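/- Define the SO(3)-EKF retraction X ⊕ e = (exp(S(e_θ))·R, p + e_p, f¹ + e¹, …, f^N + e^N) for X = (R, p, f¹, …, f^N) with R ∈ SO(3) and e = (e_θ, e_p, e¹, …, e^N) ∈ (ℝ³)^{N+2}. For R̄ ∈ SO(3) and T̄ ∈ ℝ³ let T(X) = (R̄R, R̄p + T̄, R̄f¹ + T̄, …, R̄f^N + T̄), and let Q be the linear map Q·e = (R̄e_θ, R̄e_p, R̄e¹, …, R̄e^N). Then for all X and e: T(X ⊕ e) = T(X) ⊕ (Q·e); equivalently T(X ⊕ Q^{-1}e) = T(X) ⊕ e. (This is the equivariance identity (27) used in the proof of Theorem 3 to establish invariance of SO(3)-EKF under deterministic rigid body transformations.) -/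

import Mathlib

open Matrix

/-- `S y` is the skew-symmetric matrix with `S y *ᵥ x = y ×₃ x` (cross-product matrix). -/
def S (y : Fin 3 → ℝ) : Matrix (Fin 3) (Fin 3) ℝ :=
  !![0, -y 2, y 1; y 2, 0, -y 0; -y 1, y 0, 0]

/-- A SLAM state `(R, p, f¹, …, f^N)`. -/
abbrev SlamState (N : ℕ) := Matrix (Fin 3) (Fin 3) ℝ × (Fin 3 → ℝ) × (Fin N → (Fin 3 → ℝ))

/-- An error vector `e = (e_θ, e_p, e¹, …, e^N)`. -/
abbrev ErrVec (N : ℕ) := (Fin 3 → ℝ) × (Fin 3 → ℝ) × (Fin N → (Fin 3 → ℝ))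

/-- The SO(3)-EKF retraction
`X ⊕ e = (exp(S(e_θ))·R, p + e_p, f¹ + e¹, …, f^N + e^N)`. -/
noncomputable def oplus (N : ℕ) (X : SlamState N) (e : ErrVec N) : SlamState N :=
  (NormedSpace.exp (S e.1) * X.1, X.2.1 + e.2.1, fun i => X.2.2 i + e.2.2 i)

/-- The deterministic rigid body transformation
`T(X) = (R̄R, R̄p + T̄, R̄f¹ + T̄, …, R̄f^N + T̄)`. -/
def rigid (N : ℕ) (Rb : Matrix (Fin 3) (Fin 3) ℝ) (Tb : Fin 3 → ℝ) (X : SlamState N) :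
    SlamState N :=
  (Rb * X.1, Rb *ᵥ X.2.1 + Tb, fun i => Rb *ᵥ X.2.2 i + Tb)

/-- The block-diagonal linear map `Q·e = (R̄e_θ, R̄e_p, R̄e¹, …, R̄e^N)`. -/
def Qmap (N : ℕ) (Rb : Matrix (Fin 3) (Fin 3) ℝ) (e : ErrVec N) : ErrVec N :=
  (Rb *ᵥ e.1, Rb *ᵥ e.2.1, fun i => Rb *ᵥ e.2.2 i)

lemma adj_of_so3 (R : Matrix (Fin 3) (Fin 3) ℝ) (h1 : Rᵀ * R = 1) (h2 : R.det = 1) :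
    Rᵀ = adjugate R := by
  calc Rᵀ = Rᵀ * (R * adjugate R) := by rw [Matrix.mul_adjugate, h2, one_smul, mul_one]
  _ = (Rᵀ * R) * adjugate R := by rw [mul_assoc]
  _ = adjugate R := by rw [h1, one_mul]

lemma S_conj (R : Matrix (Fin 3) (Fin 3) ℝ) (h1 : Rᵀ * R = 1) (h2 : R.det = 1)
    (y : Fin 3 → ℝ) : S (R *ᵥ y) = R * S y * Rᵀ := by
  have hadj := adj_of_so3 R h1 h2
  have hadjT : R = adjugate Rᵀ := by
    have := adj_of_so3 Rᵀ (by rwa [transpose_transpose, ← mul_eq_one_comm]) (by rwa [Matrix.det_transpose])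
    rwa [transpose_transpose] at this
  rw [adjugate_fin_three] at hadj hadjT
  have hg : R 2 0 = R 0 1 * R 1 2 - R 0 2 * R 1 1 := by
    have := congrFun (congrFun hadj 0) 2; simpa using this
  have hh : R 2 1 = -(R 0 0 * R 1 2) + R 0 2 * R 1 0 := by
    have := congrFun (congrFun hadj 1) 2; simpa using this
  have hi : R 2 2 = R 0 0 * R 1 1 - R 0 1 * R 1 0 := by
    have := congrFun (congrFun hadj 2) 2; simpa using this
  have ha : R 0 0 = R 1 1 * R 2 2 - R 2 1 * R 1 2 := by
    have := congrFun (congrFun hadjT 0) 0; simpa using this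
  have hb : R 0 1 = -(R 1 0 * R 2 2) + R 2 0 * R 1 2 := by
    have := congrFun (congrFun hadjT 0) 1; simpa using this
  have hc : R 0 2 = R 1 0 * R 2 1 - R 2 0 * R 1 1 := by
    have := congrFun (congrFun hadjT 0) 2; simpa using this
  have hd : R 1 0 = -(R 0 1 * R 2 2) + R 2 1 * R 0 2 := by
    have := congrFun (congrFun hadjT 1) 0; simpa using this
  have he : R 1 1 = R 0 0 * R 2 2 - R 2 0 * R 0 2 := by
    have := congrFun (congrFun hadjT 1) 1; simpa using this
  have hf : R 1 2 = -(R 0 0 * R 2 1) + R 2 0 * R 0 1 := by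
    have := congrFun (congrFun hadjT 1) 2; simpa using this
  have f2 : ∀ (h : 2 < 3), (⟨2, h⟩ : Fin 3) = 2 := fun _ => rfl
  ext i j
  fin_cases i <;> fin_cases j <;>
    simp only [S, mul_apply, mulVec, dotProduct, Fin.sum_univ_three, transpose_apply,
      Matrix.cons_val', Matrix.cons_val_zero, Matrix.cons_val_one, Matrix.head_cons,
      Matrix.empty_val', Matrix.cons_val_fin_one, Matrix.head_fin_const,
      f2, Matrix.cons_val_two, Matrix.tail_cons, Matrix.of_apply, Fin.mk_zero, Fin.mk_one,
      Matrix.cons_val_fin_one, Fin.isValue]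
  · ring
  · linear_combination (-(y 0)) * hg - y 1 * hh - y 2 * hi
  · linear_combination y 0 * hd + y 1 * he + y 2 * hf
  · linear_combination y 0 * hg + y 1 * hh + y 2 * hi
  · ring
  · linear_combination (-(y 0)) * ha - y 1 * hb - y 2 * hc
  · linear_combination (-(y 0)) * hd - y 1 * he - y 2 * hf
  · linear_combination y 0 * ha + y 1 * hb + y 2 * hc
  · ring

lemma exp_S_comm (Rb : Matrix (Fin 3) (Fin 3) ℝ) (h1 : Rbᵀ * Rb = 1) (h2 : Rb.det = 1)
    (v : Fin 3 → ℝ) :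
    NormedSpace.exp (S (Rb *ᵥ v)) * Rb = Rb * NormedSpace.exp (S v) := by
  have hinv : Rb⁻¹ = Rbᵀ := Matrix.inv_eq_left_inv h1
  have hU : IsUnit Rb := Matrix.isUnit_iff_isUnit_det Rb |>.2 (by rw [h2]; exact isUnit_one)
  have := Matrix.exp_conj Rb (S v) hU
  rw [hinv] at this
  rw [S_conj Rb h1 h2 v, this, mul_assoc, mul_assoc]
  congr 1
  rw [← hinv, Matrix.nonsing_inv_mul _ (by rw [h2]; exact isUnit_one), mul_one]

/-- The equivariance identity (27) used in the proof of Theorem 3: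
`T(X ⊕ e) = T(X) ⊕ (Q·e)`, equivalently `T(X ⊕ Q⁻¹e) = T(X) ⊕ e`
(here `Q⁻¹` is the block-diagonal map with blocks `R̄ᵀ = R̄⁻¹`). -/
theorem so3ekf_retraction_equivariant (N : ℕ)
    (Rb : Matrix (Fin 3) (Fin 3) ℝ) (Tb : Fin 3 → ℝ)
    (hRb : Rbᵀ * Rb = 1 ∧ Rb.det = 1) :
    ∀ X : SlamState N, X.1ᵀ * X.1 = 1 ∧ X.1.det = 1 →
      ∀ e : ErrVec N,
        rigid N Rb Tb (oplus N X e) = oplus N (rigid N Rb Tb X) (Qmap N Rb e) ∧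
        rigid N Rb Tb (oplus N X (Qmap N Rbᵀ e)) = oplus N (rigid N Rb Tb X) e := by
  obtain ⟨h1, h2⟩ := hRb
  have hright : Rb * Rbᵀ = 1 := mul_eq_one_comm.mp h1
  have main : ∀ X : SlamState N, ∀ e : ErrVec N,
      rigid N Rb Tb (oplus N X e) = oplus N (rigid N Rb Tb X) (Qmap N Rb e) := by
    intro X e
    refine Prod.ext ?_ (Prod.ext ?_ ?_)
    · show Rb * (NormedSpace.exp (S e.1) * X.1)
        = NormedSpace.exp (S (Rb *ᵥ e.1)) * (Rb * X.1)
      rw [← mul_assoc, ← exp_S_comm Rb h1 h2, mul_assoc]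
    · show Rb *ᵥ (X.2.1 + e.2.1) + Tb = (Rb *ᵥ X.2.1 + Tb) + Rb *ᵥ e.2.1
      rw [Matrix.mulVec_add]; abel
    · funext i
      show Rb *ᵥ (X.2.2 i + e.2.2 i) + Tb = (Rb *ᵥ X.2.2 i + Tb) + Rb *ᵥ e.2.2 i
      rw [Matrix.mulVec_add]; abel
  intro X _ e
  refine ⟨main X e, ?_⟩
  have hq : Qmap N Rb (Qmap N Rbᵀ e) = e := by
    have cancel : ∀ v : Fin 3 → ℝ, Rb *ᵥ (Rbᵀ *ᵥ v) = v := by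
      intro v; rw [Matrix.mulVec_mulVec, hright, Matrix.one_mulVec]
    refine Prod.ext (cancel _) (Prod.ext (cancel _) (funext fun i => cancel _))
  rw [main X (Qmap N Rbᵀ e), hq]
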